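/- Let A be the adjacency matrix of a finite simple graph on vertex set V and fix O ⊆ V with |O| ≥ 4. Let u = A_{OO}·1 and v = A_{O O^c}·1 (so u_j = deg_O(j) and v_j = deg_{V∖O}(j) for j ∈ O), let S = Ξ( A_{OO} + A_{OO}² − A_{OO} ⊙ ( u 1ᵀ + 1 uᵀ ) + u uᵀ ) where Ξ doubles the diagonal entries and ⊙ is the entrywise product, and let z = ( 1ᵀu + 2·1ᵀv ) u − 2 v ⊙ u + 2 ( A_{OO} v + u ). Then QᵀQ = 2^{|O|−4} S and Qᵀr = 2^{|O|−4} z; consequently every minimizer b of ‖Qb − r‖₂² over b ∈ ℝ^O satisfies S b = z. -/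

import Mathlib

open Finset Matrix

variable {V : Type*} [Fintype V] [DecidableEq V]

/-- The adjacency matrix of the graph, real-valued. -/
noncomputable def adjMat (G : SimpleGraph V) [DecidableRel G.Adj] (i j : V) : ℝ :=
  if G.Adj i j then 1 else 0

/-- `vol(I,J) = ∑_{i∈I} ∑_{j∈J} A_{ij}`. -/
noncomputable def vol (G : SimpleGraph V) [DecidableRel G.Adj] (I J : Finset V) : ℝ :=
  ∑ i ∈ I, ∑ j ∈ J, adjMat G i j

/-- `deg_S(i) = ∑_{s∈S} A_{is}`. -/
noncomputable def degS (G : SimpleGraph V) [DecidableRel G.Adj] (S : Finset V) (i : V) : ℝ :=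
  ∑ s ∈ S, adjMat G i s

/-- `vol²_S(i,j) = ∑_{r∈S} A_{ir} A_{rj}`, the number of paths of length 2 from `i` to `j`
through `S`. -/
noncomputable def vol2 (G : SimpleGraph V) [DecidableRel G.Adj] (S : Finset V) (i j : V) : ℝ :=
  ∑ r ∈ S, adjMat G i r * adjMat G r j

variable (G : SimpleGraph V) [DecidableRel G.Adj] (O : Finset V)

/-- The submatrix `A_{OO}` of the adjacency matrix. -/
noncomputable def AOO : Matrix O O ℝ := fun i j => adjMat G (i : V) (j : V)

/-- `u = A_{OO}·1`, i.e. `u_j = deg_O(j)`. -/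
noncomputable def uVec : O → ℝ := fun j => ∑ k : O, adjMat G (j : V) (k : V)

/-- `v = A_{OO^c}·1`, i.e. `v_j = deg_{V∖O}(j)`. -/
noncomputable def vVec : O → ℝ := fun j => ∑ k ∈ Oᶜ, adjMat G (j : V) k

/-- The operator `Ξ` that doubles the diagonal entries of a matrix. -/
def Xi {m : Type*} [DecidableEq m] (M : Matrix m m ℝ) : Matrix m m ℝ :=
  fun i j => if i = j then 2 * M i j else M i j

/-- `S = Ξ(A_{OO} + A_{OO}² − A_{OO} ⊙ (u1ᵀ + 1uᵀ) + uuᵀ)`. -/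
noncomputable def Smat : Matrix O O ℝ :=
  Xi (AOO G O + AOO G O ^ 2
      - Matrix.hadamard (AOO G O)
          (Matrix.vecMulVec (uVec G O) (fun _ => 1) + Matrix.vecMulVec (fun _ => 1) (uVec G O))
      + Matrix.vecMulVec (uVec G O) (uVec G O))

/-- `z = (1ᵀu + 2·1ᵀv) u − 2 v ⊙ u + 2 (A_{OO} v + u)`. -/
noncomputable def zVec : O → ℝ := fun j =>
  ((∑ k : O, uVec G O k) + 2 * ∑ k : O, vVec G O k) * uVec G O j
    - 2 * (vVec G O j * uVec G O j)
    + 2 * ((AOO G O).mulVec (vVec G O) j + uVec G O j)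

/-- The matrix `Q`, with rows indexed by proper subsets `I ⊊ O` and columns by `j ∈ O`:
`Q_{I,j} = 1{j∉I} vol(I,{j})`. -/
noncomputable def Qmat : Matrix {I : Finset V // I ⊂ O} O ℝ :=
  fun I j => (if (j : V) ∉ I.1 then (1 : ℝ) else 0) * vol G I.1 {(j : V)}

/-- The vector `r`, indexed by proper subsets `I ⊊ O`: `r_I = vol(I, V∖I)`. -/
noncomputable def rVec : {I : Finset V // I ⊂ O} → ℝ := fun I => vol G I.1 (I.1)ᶜ

/-!
Since `j ∉ I` forces `I ≠ O`, the entry `(QᵀQ)_{jk}` is a sum over all subsets `I` of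
`T = O ∖ {j, k}`, and `(Qᵀr)_j` one over all subsets of `T = O ∖ {j}`; in both, `vol(I, {j})` is the
linear statistic `∑_{a ∈ I} A_{ja}`. Summing over all subsets of `T` computes `2^|T|` times a moment
of a uniformly random subset: first and second moments of linear statistics are explicit, and the
cut `vol(I, T ∖ I)` contained in `r_I` is invariant under `I ↦ T ∖ I`, so its product with a linear
statistic averages to half the total of that statistic times the average cut. The last claim is the
normal equation `QᵀQ b = Qᵀr` of least squares, divided by `2^{|O|-4}`.
-/

namespace Finset

variable {α : Type*} [DecidableEq α]

theorem sum_powerset_sum (T : Finset α) (f : α → ℝ) :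
    ∑ I ∈ T.powerset, ∑ a ∈ I, f a = 2 ^ ((#T : ℤ) - 1) * ∑ a ∈ T, f a := by
  induction T using Finset.induction_on with
  | empty => simp
  | insert x T hx ih =>
    have hins : ∀ I ∈ T.powerset, ∑ a ∈ insert x I, f a = f x + ∑ a ∈ I, f a :=
      fun I hI => sum_insert fun h => hx (mem_powerset.1 hI h)
    have h2 : (2 : ℝ) ^ #T = 2 * 2 ^ ((#T : ℤ) - 1) := by
      rw [← zpow_natCast, ← zpow_one_add₀ two_ne_zero, add_sub_cancel]
    rw [sum_powerset_insert hx, sum_congr rfl hins, sum_add_distrib, ih, sum_const,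
      card_powerset, card_insert_of_notMem hx, sum_insert hx, nsmul_eq_mul, Nat.cast_pow,
      Nat.cast_ofNat, Nat.cast_add_one, add_sub_cancel_right, zpow_natCast, h2]
    ring

theorem sum_powerset_sum_sum (T : Finset α) (B : α → α → ℝ) :
    ∑ I ∈ T.powerset, ∑ a ∈ I, ∑ b ∈ I, B a b =
      2 ^ ((#T : ℤ) - 2) * (∑ a ∈ T, ∑ b ∈ T, B a b + ∑ a ∈ T, B a a) := by
  induction T using Finset.induction_on with
  | empty => simp
  | insert x T hx ih =>
    have hins : ∀ I ∈ T.powerset, ∑ a ∈ insert x I, ∑ b ∈ insert x I, B a b =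
        B x x + ∑ b ∈ I, B x b + ∑ a ∈ I, B a x + ∑ a ∈ I, ∑ b ∈ I, B a b := by
      intro I hI
      have hxI : x ∉ I := fun h => hx (mem_powerset.1 hI h)
      simp only [sum_insert hxI, sum_add_distrib]
      ring
    have h1 : (2 : ℝ) ^ ((#T : ℤ) + 1 - 2) = 2 * 2 ^ ((#T : ℤ) - 2) := by
      rw [← zpow_one_add₀ two_ne_zero]; ring_nf
    have h1' : (2 : ℝ) ^ ((#T : ℤ) - 1) = 2 * 2 ^ ((#T : ℤ) - 2) := by
      rw [← zpow_one_add₀ two_ne_zero]; ring_nf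
    have h2 : (2 : ℝ) ^ #T = 4 * 2 ^ ((#T : ℤ) - 2) := by
      rw [← zpow_natCast, show (4 : ℝ) = 2 ^ (2 : ℤ) by norm_num, ← zpow_add₀ two_ne_zero,
        add_sub_cancel]
    rw [sum_powerset_insert hx, sum_congr rfl hins]
    simp only [sum_add_distrib, sum_const, card_powerset, nsmul_eq_mul, ih, sum_powerset_sum,
      card_insert_of_notMem hx, sum_insert hx, Nat.cast_pow, Nat.cast_ofNat, Nat.cast_add_one,
      h1, h1', h2]
    ring

theorem sum_powerset_sdiff (T : Finset α) (F : Finset α → ℝ) :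
    ∑ I ∈ T.powerset, F (T \ I) = ∑ I ∈ T.powerset, F I :=
  sum_nbij' (T \ ·) (T \ ·) (by simp) (by simp)
    (fun I hI => Finset.sdiff_sdiff_eq_self (mem_powerset.1 hI))
    (fun I hI => Finset.sdiff_sdiff_eq_self (mem_powerset.1 hI)) fun _ _ => rfl

theorem sum_powerset_sum_sum_sdiff (T : Finset α) (B : α → α → ℝ) :
    ∑ I ∈ T.powerset, ∑ i ∈ I, ∑ m ∈ T \ I, B i m =
      2 ^ ((#T : ℤ) - 2) * (∑ a ∈ T, ∑ b ∈ T, B a b - ∑ a ∈ T, B a a) := by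
  have hsplit : ∀ I ∈ T.powerset, ∑ i ∈ I, ∑ m ∈ T \ I, B i m =
      ∑ i ∈ I, ∑ m ∈ T, B i m - ∑ i ∈ I, ∑ m ∈ I, B i m := fun I hI => by
    simp only [sum_sdiff_eq_sub (mem_powerset.1 hI), sum_sub_distrib]
  have h1 : (2 : ℝ) ^ ((#T : ℤ) - 1) = 2 * 2 ^ ((#T : ℤ) - 2) := by
    rw [← zpow_one_add₀ two_ne_zero]; ring_nf
  rw [sum_congr rfl hsplit, sum_sub_distrib, sum_powerset_sum, sum_powerset_sum_sum, h1]
  ring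

theorem sum_powerset_sum_mul_sum_sum_sdiff (T : Finset α) (c : α → ℝ) {B : α → α → ℝ}
    (hB : ∀ a b, B a b = B b a) :
    ∑ I ∈ T.powerset, (∑ a ∈ I, c a) * ∑ i ∈ I, ∑ m ∈ T \ I, B i m =
      2 ^ ((#T : ℤ) - 3) * (∑ a ∈ T, c a) *
        (∑ a ∈ T, ∑ b ∈ T, B a b - ∑ a ∈ T, B a a) := by
  set cut : Finset α → ℝ := fun I => ∑ i ∈ I, ∑ m ∈ T \ I, B i m
  have hcut : ∀ I ∈ T.powerset, cut (T \ I) = cut I := fun I hI => by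
    simp only [cut, Finset.sdiff_sdiff_eq_self (mem_powerset.1 hI)]
    rw [sum_comm]
    simp only [hB]
  have hc : ∀ I ∈ T.powerset, ∑ a ∈ I, c a + ∑ a ∈ T \ I, c a = ∑ a ∈ T, c a := fun I hI => by
    rw [add_comm, sum_sdiff (mem_powerset.1 hI)]
  have h2 : (2 : ℝ) ^ ((#T : ℤ) - 2) = 2 * 2 ^ ((#T : ℤ) - 3) := by
    rw [← zpow_one_add₀ two_ne_zero]; ring_nf
  have hsym : ∑ I ∈ T.powerset, (∑ a ∈ T \ I, c a) * cut I =
      ∑ I ∈ T.powerset, (∑ a ∈ I, c a) * cut I := by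
    rw [← sum_powerset_sdiff T fun I => (∑ a ∈ I, c a) * cut I]
    exact sum_congr rfl fun I hI => by rw [hcut I hI]
  have htwice : 2 * ∑ I ∈ T.powerset, (∑ a ∈ I, c a) * cut I =
      (∑ a ∈ T, c a) * ∑ I ∈ T.powerset, cut I := by
    rw [two_mul]
    nth_rw 2 [← hsym]
    rw [← sum_add_distrib, mul_sum]
    exact sum_congr rfl fun I hI => by rw [← add_mul, hc I hI]
  simp only [cut] at htwice
  rw [sum_powerset_sum_sum_sdiff, h2] at htwice
  linarith

theorem sum_powerset_sum_mul_sum (T : Finset α) (f g : α → ℝ) :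
    ∑ I ∈ T.powerset, (∑ a ∈ I, f a) * ∑ b ∈ I, g b =
      2 ^ ((#T : ℤ) - 2) * ((∑ a ∈ T, f a) * (∑ b ∈ T, g b) + ∑ a ∈ T, f a * g a) := by
  simp only [sum_mul_sum]
  exact sum_powerset_sum_sum T fun a b => f a * g b

theorem sum_ssubset_ite_disjoint [Fintype α] {s T : Finset α} (hs : ¬Disjoint s T)
    (f : Finset α → ℝ) :
    ∑ I : {I : Finset α // I ⊂ T}, (if Disjoint s I.1 then f I.1 else 0) =
      ∑ I ∈ (T \ s).powerset, f I := by
  rw [← sum_subtype T.ssubsets (fun _ => mem_ssubsets) fun I => if Disjoint s I then f I else 0,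
    ← sum_filter]
  congr 1
  ext I
  simp only [mem_filter, mem_ssubsets, mem_powerset, subset_sdiff, ssubset_iff_subset_ne]
  constructor
  · rintro ⟨⟨hIT, -⟩, hd⟩
    exact ⟨hIT, hd.symm⟩
  · rintro ⟨hIT, hd⟩
    refine ⟨⟨hIT, ?_⟩, hd.symm⟩
    rintro rfl
    exact hs hd.symm

theorem sum_sdiff_pair_of_eq_zero {s : Finset α} {j k : α} (hj : j ∈ s) (hk : k ∈ s)
    {f : α → ℝ} (hf : f j = 0) : ∑ a ∈ s \ {j, k}, f a = ∑ a ∈ s, f a - f k := by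
  rw [sum_sdiff_eq_sub (insert_subset hj (singleton_subset_iff.2 hk)), sum_insert_zero hf,
    sum_singleton]

theorem two_zpow_card_sdiff_pair_sub_two {O : Finset α} {j k : α} (hj : j ∈ O) (hk : k ∈ O) :
    (2 : ℝ) ^ ((#(O \ {j, k}) : ℤ) - 2) = 2 ^ ((#O : ℤ) - 4) * if j = k then 2 else 1 := by
  have hjk : {j, k} ⊆ O := insert_subset hj (singleton_subset_iff.2 hk)
  have hexp : (#(O \ {j, k}) : ℤ) - 2 = (#O - 4) + (2 - #{j, k}) := by
    rw [card_sdiff_of_subset hjk, Nat.cast_sub (card_le_card hjk)]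
    ring
  rw [hexp, zpow_add₀ two_ne_zero]
  by_cases h : j = k
  · simp [h]
  · rw [card_pair h, if_neg h]
    norm_num

end Finset

theorem Matrix.transpose_mul_mulVec_eq_of_forall_sum_sq_le {m n K : Type*} [Fintype m] [Fintype n]
    [Field K] [LinearOrder K] [IsStrictOrderedRing K] (Q : Matrix n m K) (r : n → K) (b : m → K)
    (hmin : ∀ b' : m → K, ∑ i, ((Q *ᵥ b) i - r i) ^ 2 ≤ ∑ i, ((Q *ᵥ b') i - r i) ^ 2) :
    (Qᵀ * Q) *ᵥ b = Qᵀ *ᵥ r := by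
  set e := Q *ᵥ b - r
  have horth : ∀ d, (Q *ᵥ d) ⬝ᵥ e = 0 := by
    intro d
    have hquad : ∀ t : K, 0 ≤ (Q *ᵥ d) ⬝ᵥ (Q *ᵥ d) * (t * t) + 2 * ((Q *ᵥ d) ⬝ᵥ e) * t + 0 := by
      intro t
      have hexp : ∑ i, ((Q *ᵥ (b + t • d)) i - r i) ^ 2 = ∑ i, ((Q *ᵥ b) i - r i) ^ 2 +
          ((Q *ᵥ d) ⬝ᵥ (Q *ᵥ d) * (t * t) + 2 * ((Q *ᵥ d) ⬝ᵥ e) * t) := by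
        simp only [mulVec_add, mulVec_smul, dotProduct, e, Pi.sub_apply, Pi.add_apply,
          Pi.smul_apply, smul_eq_mul, sum_mul, mul_sum, ← sum_add_distrib]
        exact sum_congr rfl fun i _ => by ring
      have h := hmin (b + t • d)
      rw [hexp] at h
      linarith
    have := discrim_le_zero hquad
    rw [discrim] at this
    nlinarith [sq_nonneg ((Q *ᵥ d) ⬝ᵥ e)]
  have h := horth (Qᵀ *ᵥ e)
  rw [dotProduct_comm, dotProduct_mulVec, ← mulVec_transpose, dotProduct_self_eq_zero] at h
  rw [← mulVec_mulVec, ← sub_eq_zero, ← mulVec_sub]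
  exact h

omit [Fintype V] [DecidableEq V] in
theorem adjMat_self (x : V) : adjMat G x x = 0 := by simp [adjMat]

omit [Fintype V] [DecidableEq V] in
theorem adjMat_comm (x y : V) : adjMat G x y = adjMat G y x := by
  simp [adjMat, SimpleGraph.adj_comm]

omit [Fintype V] [DecidableEq V] in
theorem adjMat_mul_self (x y : V) : adjMat G x y * adjMat G x y = adjMat G x y := by
  unfold adjMat; split_ifs <;> norm_num

omit [Fintype V] [DecidableEq V] in
theorem vol_singleton_right (I : Finset V) (j : V) : vol G I {j} = ∑ a ∈ I, adjMat G j a := by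
  simp [vol, adjMat_comm G _ j]

theorem vol_compl_of_subset {I T : Finset V} (h : I ⊆ T) :
    vol G I Iᶜ = vol G I (T \ I) + vol G I Tᶜ := by
  have hcompl : Iᶜ = (T \ I) ∪ Tᶜ := by
    ext x
    have := @h x
    simp only [mem_compl, mem_union, mem_sdiff]
    tauto
  simp only [vol, ← sum_add_distrib, hcompl,
    sum_union (disjoint_compl_right.mono_left sdiff_subset : Disjoint (T \ I) Tᶜ)]

omit [Fintype V] in
theorem Qmat_mul_Qmat (I : {I : Finset V // I ⊂ O}) (j k : O) :
    Qmat G O I j * Qmat G O I k =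
      if Disjoint {(j : V), (k : V)} I.1 then vol G I.1 {(j : V)} * vol G I.1 {(k : V)} else 0 := by
  simp only [Qmat, disjoint_insert_left, disjoint_singleton_left]
  split_ifs <;> simp_all

theorem Qmat_mul_rVec (I : {I : Finset V // I ⊂ O}) (j : O) :
    Qmat G O I j * rVec G O I =
      if Disjoint {(j : V)} I.1 then vol G I.1 {(j : V)} * vol G I.1 I.1ᶜ else 0 := by
  simp only [Qmat, rVec, disjoint_singleton_left]
  split_ifs <;> simp_all

omit [Fintype V] [DecidableEq V] in
theorem uVec_eq_degS (j : O) : uVec G O j = degS G O j :=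
  sum_coe_sort O (adjMat G j)

omit [Fintype V] in
theorem Smat_apply (j k : O) :
    Smat G O j k = (if j = k then 2 else 1) *
      (adjMat G j k + vol2 G O j k - adjMat G j k * (degS G O j + degS G O k) +
        degS G O j * degS G O k) := by
  have hsq : (AOO G O ^ 2) j k = vol2 G O j k := by
    rw [sq, mul_apply]
    exact sum_coe_sort O fun r => adjMat G j r * adjMat G r k
  simp only [Smat, Xi, Matrix.add_apply, Matrix.sub_apply, hadamard_apply, vecMulVec_apply, hsq,
    uVec_eq_degS, AOO]
  split_ifs <;> ring

theorem zVec_apply (j : O) :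
    zVec G O j = (vol G O O + 2 * vol G O Oᶜ) * degS G O j - 2 * (degS G Oᶜ j * degS G O j) +
      2 * (∑ i ∈ O, adjMat G j i * degS G Oᶜ i + degS G O j) := by
  have hu : ∑ k : O, uVec G O k = vol G O O := by
    simp only [uVec_eq_degS]
    exact sum_coe_sort O (degS G O)
  have hv : ∑ k : O, vVec G O k = vol G O Oᶜ := sum_coe_sort O (degS G Oᶜ)
  have hAv : (AOO G O *ᵥ vVec G O) j = ∑ i ∈ O, adjMat G j i * degS G Oᶜ i :=
    sum_coe_sort O fun i => adjMat G j i * degS G Oᶜ i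
  rw [zVec, hu, hv, hAv, uVec_eq_degS]
  rfl

omit [Fintype V] [DecidableEq V] in
theorem sum_adjMat_left (S : Finset V) (j : V) : ∑ a ∈ S, adjMat G a j = degS G S j :=
  sum_congr rfl fun a _ => adjMat_comm G a j

theorem degS_compl_erase {j : V} (hj : j ∈ O) (i : V) :
    degS G (O.erase j)ᶜ i = adjMat G i j + degS G Oᶜ i := by
  rw [degS, compl_erase, sum_insert (notMem_compl.2 hj)]
  rfl

omit [Fintype V] in
theorem sum_erase_sum_erase_adjMat {j : V} (hj : j ∈ O) :
    ∑ a ∈ O.erase j, ∑ b ∈ O.erase j, adjMat G a b = vol G O O - 2 * degS G O j := by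
  simp only [sum_erase_eq_sub hj, sum_sub_distrib, sum_adjMat_left, adjMat_self]
  rw [vol, degS]
  ring

theorem sum_erase_degS_compl_erase {j : V} (hj : j ∈ O) :
    ∑ a ∈ O.erase j, degS G (O.erase j)ᶜ a = degS G O j + vol G O Oᶜ - degS G Oᶜ j := by
  have hvol : vol G O Oᶜ = ∑ i ∈ O, degS G Oᶜ i := rfl
  simp only [degS_compl_erase G O hj, sum_add_distrib, sum_erase_eq_sub hj, sum_adjMat_left,
    adjMat_self, hvol]
  ring

theorem sum_erase_adjMat_mul_degS_compl_erase {j : V} (hj : j ∈ O) :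
    ∑ a ∈ O.erase j, adjMat G j a * degS G (O.erase j)ᶜ a =
      degS G O j + ∑ i ∈ O, adjMat G j i * degS G Oᶜ i := by
  have hsq : ∀ a, adjMat G j a * adjMat G a j = adjMat G j a := fun a => by
    rw [adjMat_comm G a j, adjMat_mul_self]
  simp only [degS_compl_erase G O hj, mul_add, sum_add_distrib, hsq]
  rw [sum_erase _ (adjMat_self G j), sum_erase _ (by rw [adjMat_self, zero_mul])]
  rfl

theorem transpose_Qmat_mul_Qmat_apply (j k : O) :
    ((Qmat G O)ᵀ * Qmat G O) j k = 2 ^ ((#O : ℤ) - 4) * Smat G O j k := by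
  set T := O \ {(j : V), (k : V)}
  have hj : ∑ a ∈ T, adjMat G j a = degS G O j - adjMat G j k :=
    sum_sdiff_pair_of_eq_zero j.2 k.2 (adjMat_self G j)
  have hk : ∑ a ∈ T, adjMat G k a = degS G O k - adjMat G j k := by
    rw [show T = O \ {(k : V), (j : V)} by rw [pair_comm],
      sum_sdiff_pair_of_eq_zero k.2 j.2 (adjMat_self G k), adjMat_comm G k j]
    rfl
  have hjk : ∑ a ∈ T, adjMat G j a * adjMat G k a = vol2 G O j k := by
    rw [sum_sdiff_pair_of_eq_zero j.2 k.2 (by rw [adjMat_self, zero_mul]), adjMat_self, mul_zero,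
      sub_zero]
    exact sum_congr rfl fun a _ => by rw [adjMat_comm G k a]
  calc ((Qmat G O)ᵀ * Qmat G O) j k = ∑ I, Qmat G O I j * Qmat G O I k := rfl
    _ = ∑ I ∈ T.powerset, vol G I {(j : V)} * vol G I {(k : V)} := by
      simp only [Qmat_mul_Qmat]
      exact sum_ssubset_ite_disjoint (not_disjoint_iff.2 ⟨(j : V), mem_insert_self _ _, j.2⟩)
        fun I => vol G I {(j : V)} * vol G I {(k : V)}
    _ = ∑ I ∈ T.powerset, (∑ a ∈ I, adjMat G j a) * ∑ b ∈ I, adjMat G k b := by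
      simp only [vol_singleton_right]
    _ = 2 ^ ((#O : ℤ) - 4) * Smat G O j k := by
      rw [sum_powerset_sum_mul_sum, hj, hk, hjk, two_zpow_card_sdiff_pair_sub_two j.2 k.2,
        Smat_apply]
      simp only [Subtype.coe_inj]
      linear_combination (2 ^ ((#O : ℤ) - 4) * if j = k then (2 : ℝ) else 1) *
        adjMat_mul_self G j k

theorem transpose_Qmat_mulVec_rVec_apply (j : O) :
    ((Qmat G O)ᵀ *ᵥ rVec G O) j = 2 ^ ((#O : ℤ) - 4) * zVec G O j := by
  have hjO : (j : V) ∈ O := j.2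
  set T := O.erase j
  have hcard : (#T : ℤ) = #O - 1 := by
    rw [card_erase_of_mem hjO, Nat.cast_sub (card_pos.2 ⟨_, hjO⟩), Nat.cast_one]
  have hc : ∑ a ∈ T, adjMat G j a = degS G O j := by
    rw [sum_erase _ (adjMat_self G j)]
    rfl
  calc ((Qmat G O)ᵀ *ᵥ rVec G O) j = ∑ I, Qmat G O I j * rVec G O I := rfl
    _ = ∑ I ∈ T.powerset, vol G I {(j : V)} * vol G I Iᶜ := by
      simp only [Qmat_mul_rVec]
      rw [sum_ssubset_ite_disjoint (not_disjoint_iff.2 ⟨(j : V), mem_singleton_self _, hjO⟩)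
        fun I => vol G I {(j : V)} * vol G I Iᶜ, sdiff_singleton_eq_erase]
    _ = ∑ I ∈ T.powerset, ((∑ a ∈ I, adjMat G j a) * ∑ i ∈ I, ∑ m ∈ T \ I, adjMat G i m +
          (∑ a ∈ I, adjMat G j a) * ∑ i ∈ I, degS G Tᶜ i) :=
      sum_congr rfl fun I hI => by
        rw [vol_compl_of_subset G (mem_powerset.1 hI), vol_singleton_right, mul_add]
        rfl
    _ = 2 ^ ((#O : ℤ) - 4) * zVec G O j := by
      rw [sum_add_distrib, sum_powerset_sum_mul_sum_sum_sdiff _ _ (adjMat_comm G),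
        sum_powerset_sum_mul_sum, hc, sum_erase_sum_erase_adjMat G O hjO,
        sum_eq_zero fun a _ => adjMat_self G a, sum_erase_degS_compl_erase G O hjO,
        sum_erase_adjMat_mul_degS_compl_erase G O hjO, zVec_apply, hcard,
        show (#O : ℤ) - 1 - 2 = 1 + ((#O : ℤ) - 4) by ring, zpow_one_add₀ two_ne_zero,
        show (#O : ℤ) - 1 - 3 = (#O : ℤ) - 4 by ring]
      ring

theorem mean_field_linear_system :
    (Qmat G O)ᵀ * Qmat G O = ((2 : ℝ) ^ ((O.card : ℤ) - 4)) • Smat G O ∧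
    (Qmat G O)ᵀ.mulVec (rVec G O) = ((2 : ℝ) ^ ((O.card : ℤ) - 4)) • zVec G O ∧
    ∀ b : O → ℝ,
      (∀ b' : O → ℝ,
          ∑ I : {I : Finset V // I ⊂ O}, ((Qmat G O).mulVec b I - rVec G O I) ^ 2 ≤
            ∑ I : {I : Finset V // I ⊂ O}, ((Qmat G O).mulVec b' I - rVec G O I) ^ 2) →
        (Smat G O).mulVec b = zVec G O := by
  have hQQ : (Qmat G O)ᵀ * Qmat G O = ((2 : ℝ) ^ ((O.card : ℤ) - 4)) • Smat G O := by
    ext j k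
    exact transpose_Qmat_mul_Qmat_apply G O j k
  have hQr : (Qmat G O)ᵀ *ᵥ rVec G O = ((2 : ℝ) ^ ((O.card : ℤ) - 4)) • zVec G O :=
    funext (transpose_Qmat_mulVec_rVec_apply G O)
  refine ⟨hQQ, hQr, fun b hb => ?_⟩
  have hnormal := transpose_mul_mulVec_eq_of_forall_sum_sq_le _ _ b hb
  rw [hQQ, hQr, smul_mulVec] at hnormal
  exact smul_right_injective _ (zpow_ne_zero _ two_ne_zero) hnormal
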